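/- arXiv:1701.06738 — 8 statements merged into one kernel-verified Lean document; each statement's English description precedes it below -/
import Mathlib

section
/- The operators d^r are uniquely determined by the two properties: (i) f = Σ_{r=1}^n d^r(f)·x_r for all f in the maximal ideal, and (ii) d^r(f) ∈ K[[x_r,...,x_n]]. That is, if (g_1,...,g_n) satisfies f = Σ g_r x_r with g_r ∈ K[[x_r,...,x_n]] for all r, then g_r = d^r(f) for all r. -/
open Classical in
/-- The operator `d^r` on `K[[x_1,…,x_n]]`. -/
noncomputable def dOp {K : Type*} [Field K] {n : ℕ} (r : Fin n)
    (f : MvPowerSeries (Fin n) K) : MvPowerSeries (Fin n) K :=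
  fun m => if (∀ i : Fin n, i < r → m i = 0)
    then MvPowerSeries.coeff (m + Finsupp.single r 1) f else 0

/-!
Compare coefficients at `m + e_r`, where `m` involves only `x_r, …, x_n`. In
`g_s x_s` with `s < r` this monomial has no factor `x_s`; with `s > r`, the monomial it
asks of `g_s` still contains `x_r`, which `g_s` does not involve. Hence only `s = r`
contributes, and the coefficient of `m` in `g_r` is that of `m + e_r` in `f`. For any
other `m` both `g_r` and `d^r f` have coefficient zero.
-/

open MvPowerSeries Finsupp

namespace MvPowerSeries

variable {σ R : Type*} [CommSemiring R]

theorem coeff_mul_X_of_apply_eq_zero (φ : MvPowerSeries σ R) {m : σ →₀ ℕ} {s : σ}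
    (hm : m s = 0) : coeff m (φ * X s) = 0 := by
  have hle : ¬single s 1 ≤ m := fun h => by simpa [hm] using h s
  rw [X_def, coeff_mul_monomial, if_neg hle]

variable [LinearOrder σ]

theorem coeff_add_single_mul_X_of_ne {φ : MvPowerSeries σ R} {m : σ →₀ ℕ}
    {r s : σ} (hsr : s ≠ r) (hm : ∀ i < r, m i = 0)
    (hφ : ∀ m : σ →₀ ℕ, ∀ i < s, m i ≠ 0 → coeff m φ = 0) :
    coeff (m + single r 1) (φ * X s) = 0 := by
  rcases hsr.lt_or_gt with hlt | hgt
  · apply coeff_mul_X_of_apply_eq_zero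
    simp [hm s hlt, hsr]
  · rw [X_def, coeff_mul_monomial]
    split_ifs
    · rw [hφ _ r hgt (by simp [hsr.symm]), zero_mul]
    · rfl

theorem coeff_add_single_sum_mul_X [Fintype σ] {g : σ → MvPowerSeries σ R}
    {m : σ →₀ ℕ} {r : σ} (hm : ∀ i < r, m i = 0)
    (hg : ∀ s, ∀ m : σ →₀ ℕ, ∀ i < s, m i ≠ 0 → coeff m (g s) = 0) :
    coeff (m + single r 1) (∑ s, g s * X s) = coeff m (g r) := by
  rw [map_sum, Finset.sum_eq_single r
    (fun s _ hsr => coeff_add_single_mul_X_of_ne hsr hm (hg s)) (by simp),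
    X_def, coeff_add_mul_monomial, mul_one]

end MvPowerSeries

theorem dOp_unique_general {K : Type*} [Field K] {n : ℕ}
    (f : MvPowerSeries (Fin n) K)
    (g : Fin n → MvPowerSeries (Fin n) K)
    (hsum : f = ∑ r : Fin n, g r * MvPowerSeries.X r)
    (hsupp : ∀ r : Fin n, ∀ m : Fin n →₀ ℕ, ∀ i : Fin n, i < r → m i ≠ 0 →
      MvPowerSeries.coeff m (g r) = 0) :
    ∀ r : Fin n, g r = dOp r f := by
  intro r
  ext m
  change coeff m (g r) = dOp r f m
  by_cases hm : ∀ i < r, m i = 0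
  · rw [dOp, if_pos hm, hsum, coeff_add_single_sum_mul_X hm hsupp]
  · obtain ⟨i, hir, hmi⟩ : ∃ i < r, m i ≠ 0 := by simpa using hm
    rw [dOp, if_neg hm, hsupp r m i hir hmi]

/-- The operators `d^r` are uniquely determined by the properties
(i) `f = Σ_r d^r(f)·x_r` and (ii) `d^r(f) ∈ K[[x_r,…,x_n]]`: if `(g_1,…,g_n)` satisfies
`f = Σ_r g_r·x_r` with each `g_r` involving only the variables `x_r,…,x_n`,
then `g_r = d^r(f)` for all `r`. -/
theorem dOp_unique {K : Type*} [Field K] {n : ℕ}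
    (f : MvPowerSeries (Fin n) K)
    (hf : MvPowerSeries.constantCoeff f = 0)
    (g : Fin n → MvPowerSeries (Fin n) K)
    (hsum : f = ∑ r : Fin n, g r * MvPowerSeries.X r)
    (hsupp : ∀ r : Fin n, ∀ m : Fin n →₀ ℕ, ∀ i : Fin n, i < r → m i ≠ 0 →
      MvPowerSeries.coeff m (g r) = 0) :
    ∀ r : Fin n, g r = dOp r f :=
  dOp_unique_general f g hsum hsupp
end

section
/- If I and J are d-Golod ideals of S = K[[x_1,...,x_n]], then the product IJ is d-Golod, i.e., d(IJ)² ⊆ IJ. -/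
/-- For an ideal `L` of `K[[x_1,…,x_n]]`, `d(L)` is the ideal generated by all the
elements `d^r(f)` with `f ∈ L` and `1 ≤ r ≤ n`. -/
noncomputable def dIdeal {K : Type*} [Field K] {n : ℕ}
    (L : Ideal (MvPowerSeries (Fin n) K)) : Ideal (MvPowerSeries (Fin n) K) :=
  Ideal.span {g | ∃ f ∈ L, ∃ r : Fin n, g = dOp r f}


namespace DGolodAux

open MvPowerSeries Finsupp

variable {K : Type*} [Field K] {n : ℕ}

open Classical in
theorem coeff_dOp (r : Fin n) (f : MvPowerSeries (Fin n) K) (m : Fin n →₀ ℕ) :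
    MvPowerSeries.coeff m (dOp r f) =
      if (∀ i : Fin n, i < r → m i = 0)
        then MvPowerSeries.coeff (m + Finsupp.single r 1) f else 0 := rfl

theorem dOp_add (r : Fin n) (f g : MvPowerSeries (Fin n) K) :
    dOp r (f + g) = dOp r f + dOp r g := by
  ext m
  simp only [map_add, coeff_dOp]
  split <;> simp

theorem dOp_zero (r : Fin n) : dOp r (0 : MvPowerSeries (Fin n) K) = 0 := by
  ext m
  simp [coeff_dOp]

theorem dOp_sum (r : Fin n) {α : Type*} (s : Finset α)
    (f : α → MvPowerSeries (Fin n) K) :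
    dOp r (∑ a ∈ s, f a) = ∑ a ∈ s, dOp r (f a) := by
  classical
  induction s using Finset.induction_on with
  | empty => simp [dOp_zero]
  | insert _ _ h ih => simp [Finset.sum_insert h, dOp_add, ih]

/-- `h` lives in `K[[x_t, …, x_n]]`. -/
def Lo (t : Fin n) (h : MvPowerSeries (Fin n) K) : Prop :=
  ∀ m : Fin n →₀ ℕ, (∃ i, i < t ∧ m i ≠ 0) → MvPowerSeries.coeff m h = 0

theorem lo_mono {s t : Fin n} (hst : s ≤ t) {h : MvPowerSeries (Fin n) K}
    (hh : Lo t h) : Lo s h := fun m ⟨i, hi, hmi⟩ => hh m ⟨i, lt_of_lt_of_le hi hst, hmi⟩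

theorem lo_dOp (t : Fin n) (f : MvPowerSeries (Fin n) K) : Lo t (dOp t f) := by
  intro m ⟨i, hi, hmi⟩
  rw [coeff_dOp, if_neg]
  push_neg
  exact ⟨i, hi, hmi⟩

theorem lo_X (t : Fin n) : Lo t (MvPowerSeries.X t : MvPowerSeries (Fin n) K) := by
  classical
  intro m ⟨i, hi, hmi⟩
  rw [MvPowerSeries.coeff_X, if_neg]
  intro h
  apply hmi
  rw [h, Finsupp.single_apply, if_neg (ne_of_gt hi)]

theorem lo_mul {t : Fin n} {p q : MvPowerSeries (Fin n) K}
    (hp : Lo t p) (hq : Lo t q) : Lo t (p * q) := by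
  classical
  intro m ⟨i, hi, hmi⟩
  rw [MvPowerSeries.coeff_mul]
  apply Finset.sum_eq_zero
  rintro ⟨a, b⟩ hab
  rw [Finset.HasAntidiagonal.mem_antidiagonal] at hab
  have : a i + b i = m i := by rw [← Finsupp.add_apply, hab]
  rcases Nat.eq_zero_or_pos (a i) with h0 | h0
  · have hb : b i ≠ 0 := by omega
    rw [hq b ⟨i, hi, hb⟩, mul_zero]
  · rw [hp a ⟨i, hi, by omega⟩, zero_mul]

/-- Key computation: `d^t (x_t * h) = h` when `h ∈ K[[x_t,…,x_n]]`. -/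
theorem dOp_X_mul {t : Fin n} {h : MvPowerSeries (Fin n) K} (hh : Lo t h) :
    dOp t (MvPowerSeries.X t * h) = h := by
  classical
  ext m
  rw [coeff_dOp]
  split
  · rw [mul_comm, MvPowerSeries.X_def, MvPowerSeries.coeff_add_mul_monomial, mul_one]
  · next hc =>
    push_neg at hc
    obtain ⟨i, hi, hmi⟩ := hc
    exact (hh m ⟨i, hi, hmi⟩).symm

theorem dOp_X_mul_eq_zero_of_lt {r t : Fin n} (hrt : r < t)
    (h : MvPowerSeries (Fin n) K) : dOp t (MvPowerSeries.X r * h) = 0 := by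
  classical
  ext m
  rw [coeff_dOp, map_zero]
  split
  · next hc =>
    rw [MvPowerSeries.X_def, MvPowerSeries.coeff_monomial_mul, if_neg]
    rw [Finsupp.single_le_iff, Finsupp.add_apply, hc r hrt,
      Finsupp.single_apply, if_neg (ne_of_gt hrt)]
    simp
  · rfl

theorem dOp_eq_zero_of_lo {r t : Fin n} (htr : t < r)
    {h : MvPowerSeries (Fin n) K} (hh : Lo r h) : dOp t h = 0 := by
  ext m
  rw [coeff_dOp, map_zero]
  split
  · refine hh _ ⟨t, htr, ?_⟩
    simp [Finsupp.add_apply, Finsupp.single_apply]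
  · rfl

theorem coeff_X_mul_eq (r : Fin n) (h : MvPowerSeries (Fin n) K) (m : Fin n →₀ ℕ) :
    MvPowerSeries.coeff m (MvPowerSeries.X r * h) =
      if Finsupp.single r 1 ≤ m then MvPowerSeries.coeff (m - Finsupp.single r 1) h else 0 := by
  classical
  rw [MvPowerSeries.X_def, MvPowerSeries.coeff_monomial_mul]
  split <;> simp

/-- Decomposition: `f = ∑_r x_r · d^r f` when the constant term of `f` is `0`. -/
theorem decomp {f : MvPowerSeries (Fin n) K}
    (hf : MvPowerSeries.constantCoeff f = 0) :
    f = ∑ r : Fin n, MvPowerSeries.X r * dOp r f := by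
  classical
  ext m
  rw [map_sum]
  by_cases hm : m = 0
  · subst hm
    rw [Finset.sum_eq_zero, MvPowerSeries.coeff_zero_eq_constantCoeff, hf]
    intro r _
    rw [coeff_X_mul_eq, if_neg]
    simp [Finsupp.single_le_iff]
  · -- the minimal element of the support of m
    have hsupp : m.support.Nonempty := by
      rwa [Finsupp.support_nonempty_iff]
    set t := m.support.min' hsupp with ht
    have htmem : t ∈ m.support := m.support.min'_mem hsupp
    have htm : m t ≠ 0 := Finsupp.mem_support_iff.mp htmem
    rw [Finset.sum_eq_single t]
    · rw [coeff_X_mul_eq, if_pos (Finsupp.single_le_iff.mpr (Nat.one_le_iff_ne_zero.mpr htm)),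
        coeff_dOp, if_pos, tsub_add_cancel_of_le
          (Finsupp.single_le_iff.mpr (Nat.one_le_iff_ne_zero.mpr htm))]
      intro i hi
      have : i ∉ m.support := fun hmem => absurd (m.support.min'_le i hmem) (not_le.mpr hi)
      rw [Finsupp.tsub_apply, Finsupp.notMem_support_iff.mp this]
      simp
    · intro r _ hrt
      rw [coeff_X_mul_eq]
      split
      · next hle =>
        have hr : m r ≠ 0 := Nat.one_le_iff_ne_zero.mp (Finsupp.single_le_iff.mp hle)
        have htr : t < r := lt_of_le_of_ne (m.support.min'_le r (Finsupp.mem_support_iff.mpr hr)) (Ne.symm hrt)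
        rw [coeff_dOp, if_neg]
        push_neg
        refine ⟨t, htr, ?_⟩
        rw [Finsupp.tsub_apply, Finsupp.single_apply, if_neg (ne_of_gt htr)]
        simpa using htm
      · rfl
    · intro h
      exact absurd (Finset.mem_univ t) h

/-- The key membership: for `f ∈ I`, `g ∈ J` with vanishing constant terms,
`d^t (f g) ∈ d(I) d(J)`. -/
theorem dOp_mul_mem {I J : Ideal (MvPowerSeries (Fin n) K)}
    {f g : MvPowerSeries (Fin n) K} (hfI : f ∈ I) (hgJ : g ∈ J)
    (hf0 : MvPowerSeries.constantCoeff f = 0)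
    (hg0 : MvPowerSeries.constantCoeff g = 0) (t : Fin n) :
    dOp t (f * g) ∈ dIdeal I * dIdeal J := by
  classical
  have hFmem : ∀ r : Fin n, dOp r f ∈ dIdeal I :=
    fun r => Ideal.subset_span ⟨f, hfI, r, rfl⟩
  have hGmem : ∀ s : Fin n, dOp s g ∈ dIdeal J :=
    fun s => Ideal.subset_span ⟨g, hgJ, s, rfl⟩
  rw [decomp hf0, decomp hg0]
  rw [Finset.sum_mul_sum, dOp_sum]
  apply Ideal.sum_mem
  intro r _
  rw [dOp_sum]
  apply Ideal.sum_mem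
  intro s _
  rcases lt_trichotomy r t with hrt | rfl | htr
  · -- r < t : the term dies
    rw [mul_assoc, dOp_X_mul_eq_zero_of_lt hrt]
    exact Submodule.zero_mem _
  · -- r = t
    rcases le_or_gt r s with hts | hst
    · -- t ≤ s : d^t picks out the cofactor of x_t
      rw [mul_assoc, dOp_X_mul (lo_mul (lo_dOp r f)
        (lo_mul (lo_mono hts (lo_X s)) (lo_mono hts (lo_dOp s g))))]
      exact Ideal.mul_mem_mul (hFmem r) (Ideal.mul_mem_left _ _ (hGmem s))
    · -- s < t : the term dies
      rw [mul_left_comm, dOp_X_mul_eq_zero_of_lt hst]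
      exact Submodule.zero_mem _
  · -- t < r
    rcases lt_trichotomy s t with hst | rfl | hts
    · rw [mul_left_comm, dOp_X_mul_eq_zero_of_lt hst]
      exact Submodule.zero_mem _
    · -- s = t
      rw [mul_comm (MvPowerSeries.X r * dOp r f), mul_assoc,
        dOp_X_mul (lo_mul (lo_dOp s g) (lo_mul (lo_mono htr.le (lo_X r))
          (lo_mono htr.le (lo_dOp r f))))]
      rw [mul_comm (dOp s g)]
      exact Ideal.mul_mem_mul (Ideal.mul_mem_left _ _ (hFmem r)) (hGmem s)
    · -- t < r, t < s : the whole term lives in higher variables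
      set u := min r s with hu
      have htu : t < u := lt_min htr hts
      rw [dOp_eq_zero_of_lo htu (lo_mul
        (lo_mul (lo_mono (min_le_left r s) (lo_X r)) (lo_mono (min_le_left r s) (lo_dOp r f)))
        (lo_mul (lo_mono (min_le_right r s) (lo_X s)) (lo_mono (min_le_right r s) (lo_dOp s g))))]
      exact Submodule.zero_mem _

end DGolodAux


/-- If `I` and `J` are d-Golod ideals of `K[[x_1,…,x_n]]` (contained in the maximal
ideal), then the product `IJ` is d-Golod: `d(IJ)² ⊆ IJ`. -/
theorem dGolod_mul {K : Type*} [Field K] {n : ℕ}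
    (I J : Ideal (MvPowerSeries (Fin n) K))
    (hI : ∀ f ∈ I, MvPowerSeries.constantCoeff f = 0)
    (hJ : ∀ f ∈ J, MvPowerSeries.constantCoeff f = 0)
    (hIG : (dIdeal I) ^ 2 ≤ I) (hJG : (dIdeal J) ^ 2 ≤ J) :
    (dIdeal (I * J)) ^ 2 ≤ I * J := by
  open DGolodAux in
  have key : dIdeal (I * J) ≤ dIdeal I * dIdeal J := by
    rw [dIdeal, Ideal.span_le]
    rintro g ⟨h, hh, t, rfl⟩
    refine Submodule.mul_induction_on hh (fun a ha b hb => ?_) (fun x y hx hy => ?_)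
    · exact dOp_mul_mem ha hb (hI a ha) (hJ b hb) t
    · rw [dOp_add]
      exact Submodule.add_mem _ hx hy
  calc (dIdeal (I * J)) ^ 2 ≤ (dIdeal I * dIdeal J) ^ 2 := by
        rw [pow_two, pow_two]; exact Ideal.mul_mono key key
    _ = dIdeal I ^ 2 * dIdeal J ^ 2 := by rw [pow_two, pow_two, pow_two, mul_mul_mul_comm]
    _ ≤ I * J := Ideal.mul_mono hIG hJG
end

section
/- If I and J are d-Golod ideals of S = K[[x_1,...,x_n]] and d(I)·d(J) ⊆ I + J, then I + J is d-Golod: d(I+J)² ⊆ I + J. -/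
theorem Ideal.sup_sq_le {R : Type*} [CommSemiring R] {A B I J : Ideal R}
    (hA : A ^ 2 ≤ I) (hB : B ^ 2 ≤ J) (hAB : A * B ≤ I ⊔ J) : (A ⊔ B) ^ 2 ≤ I ⊔ J := by
  rw [sq, Ideal.sup_mul, Ideal.mul_sup, Ideal.mul_sup, mul_comm B A, ← sq, ← sq]
  exact sup_le (sup_le (le_sup_of_le_left hA) hAB) (sup_le hAB (le_sup_of_le_right hB))

section

variable {K : Type*} [Field K] {n : ℕ}

theorem dOp_add (r : Fin n) (f g : MvPowerSeries (Fin n) K) :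
    dOp r (f + g) = dOp r f + dOp r g := by
  ext m
  simp only [dOp, MvPowerSeries.coeff_apply, map_add]
  split_ifs <;> simp

theorem dIdeal_sup_le (I J : Ideal (MvPowerSeries (Fin n) K)) :
    dIdeal (I ⊔ J) ≤ dIdeal I ⊔ dIdeal J := by
  rw [dIdeal, Ideal.span_le]
  rintro _ ⟨_, hf, r, rfl⟩
  obtain ⟨a, ha, b, hb, rfl⟩ := Submodule.mem_sup.mp hf
  rw [dOp_add]
  exact Submodule.add_mem_sup (Ideal.subset_span ⟨a, ha, r, rfl⟩)
    (Ideal.subset_span ⟨b, hb, r, rfl⟩)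

end

theorem dGolod_sup_general {K : Type*} [Field K] {n : ℕ}
    (I J : Ideal (MvPowerSeries (Fin n) K))
    (hIG : (dIdeal I) ^ 2 ≤ I) (hJG : (dIdeal J) ^ 2 ≤ J)
    (hIJ : dIdeal I * dIdeal J ≤ I + J) :
    (dIdeal (I + J)) ^ 2 ≤ I + J :=
  (pow_le_pow_left' (dIdeal_sup_le I J) 2).trans (Ideal.sup_sq_le hIG hJG hIJ)

/-- If `I` and `J` are d-Golod ideals of `K[[x_1,…,x_n]]` (contained in the maximal
ideal) and `d(I)·d(J) ⊆ I + J`, then `I + J` is d-Golod: `d(I+J)² ⊆ I + J`. -/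
theorem dGolod_sup {K : Type*} [Field K] {n : ℕ}
    (I J : Ideal (MvPowerSeries (Fin n) K))
    (hI : ∀ f ∈ I, MvPowerSeries.constantCoeff f = 0)
    (hJ : ∀ f ∈ J, MvPowerSeries.constantCoeff f = 0)
    (hIG : (dIdeal I) ^ 2 ≤ I) (hJG : (dIdeal J) ^ 2 ≤ J)
    (hIJ : dIdeal I * dIdeal J ≤ I + J) :
    (dIdeal (I + J)) ^ 2 ≤ I + J :=
  dGolod_sup_general I J hIG hJG hIJ
end

section
/- Let I be a monomial ideal in K[x_1,...,x_n] that is strongly d-Golod, and let J be a monomial ideal with I : J = I : J². Then I : J is strongly d-Golod. Here a monomial ideal L is strongly d-Golod if and only if for all monomials u, v ∈ L and all indices i, j with x_i | u and x_j | v, one has uv/(x_i x_j) ∈ L. -/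
/-!
Since `J` is monomial, a monomial `w` lies in `I : J²` as soon as `w m₁ m₂ ∈ I` for all
monomials `m₁, m₂ ∈ J`. For monomials `u, v ∈ I : J` we have `u m₁, v m₂ ∈ I`, and the
strongly d-Golod property of `I`, applied with `x_i ∣ u m₁` and `x_j ∣ v m₂`, gives
`(uv / x_i x_j) m₁ m₂ ∈ I`. Hence `uv / x_i x_j ∈ I : J² = I : J`.
-/

/-- An ideal of `K[x_1,…,x_n]` is a monomial ideal if with each polynomial it contains
all the monomials in its support. -/
def IsMonomialIdeal {K : Type*} [Field K] {n : ℕ}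
    (I : Ideal (MvPolynomial (Fin n) K)) : Prop :=
  ∀ f ∈ I, ∀ m ∈ f.support, MvPolynomial.monomial m (1 : K) ∈ I

/-- A monomial ideal `L` of `K[x_1,…,x_n]` is strongly d-Golod if for all monomials
`u, v ∈ L` and all variables `x_i ∣ u`, `x_j ∣ v`, one has `uv/(x_i x_j) ∈ L`. -/
def StronglyDGolod {K : Type*} [Field K] {n : ℕ}
    (L : Ideal (MvPolynomial (Fin n) K)) : Prop :=
  ∀ a b : Fin n →₀ ℕ, MvPolynomial.monomial a (1 : K) ∈ L →
    MvPolynomial.monomial b (1 : K) ∈ L →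
    ∀ i j : Fin n, a i ≠ 0 → b j ≠ 0 →
      MvPolynomial.monomial (a + b - Finsupp.single i 1 - Finsupp.single j 1) (1 : K) ∈ L

open MvPolynomial

lemma Finsupp.single_add_single_le_add {σ : Type*} {a b : σ →₀ ℕ} {i j : σ}
    (hi : a i ≠ 0) (hj : b j ≠ 0) : single i 1 + single j 1 ≤ a + b :=
  add_le_add (single_le_iff.mpr (Nat.one_le_iff_ne_zero.mpr hi))
    (single_le_iff.mpr (Nat.one_le_iff_ne_zero.mpr hj))

lemma MvPolynomial.monomial_mul_mem_of_forall_mem_support {σ R : Type*} [CommSemiring R]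
    {I : Ideal (MvPolynomial σ R)} {c : σ →₀ ℕ} {p : MvPolynomial σ R}
    (h : ∀ m ∈ p.support, monomial (c + m) (1 : R) ∈ I) :
    monomial c (1 : R) * p ∈ I := by
  rw [p.as_sum, Finset.mul_sum]
  refine Ideal.sum_mem _ fun m hm => ?_
  rw [monomial_mul, one_mul, ← mul_one (p.coeff m), ← C_mul_monomial]
  exact Ideal.mul_mem_left _ _ (h m hm)

lemma MvPolynomial.monomial_add_mem_of_mem_colon {σ R : Type*} [CommSemiring R]
    {I J : Ideal (MvPolynomial σ R)} {a m : σ →₀ ℕ}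
    (ha : monomial a (1 : R) ∈ I.colon J) (hm : monomial m (1 : R) ∈ J) :
    monomial (a + m) (1 : R) ∈ I := by
  simpa only [smul_eq_mul, monomial_mul, one_mul] using Submodule.mem_colon.mp ha _ hm

lemma monomial_mem_colon_sq {K : Type*} [Field K] {n : ℕ}
    {I J : Ideal (MvPolynomial (Fin n) K)} (hJ : IsMonomialIdeal J) {c : Fin n →₀ ℕ}
    (h : ∀ m₁ m₂, monomial m₁ (1 : K) ∈ J → monomial m₂ (1 : K) ∈ J →
      monomial (c + (m₁ + m₂)) (1 : K) ∈ I) :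
    monomial c (1 : K) ∈ I.colon ((J ^ 2 : Ideal (MvPolynomial (Fin n) K)) :
      Set (MvPolynomial (Fin n) K)) := by
  refine Submodule.mem_colon.mpr fun f hf => ?_
  rw [SetLike.mem_coe, sq] at hf
  rw [smul_eq_mul]
  refine Submodule.mul_induction_on hf (fun g hg g' hg' => ?_)
    (fun x y hx hy => by rw [mul_add]; exact Ideal.add_mem _ hx hy)
  refine monomial_mul_mem_of_forall_mem_support fun m hm => ?_
  obtain ⟨m₁, hm₁, m₂, hm₂, rfl⟩ := Finset.mem_add.mp (support_mul g g' hm)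
  exact h m₁ m₂ (hJ g hg m₁ hm₁) (hJ g' hg' m₂ hm₂)

theorem stronglyDGolod_colon_general {K : Type*} [Field K] {n : ℕ}
    (I J : Ideal (MvPolynomial (Fin n) K))
    (hJ : IsMonomialIdeal J)
    (hIG : StronglyDGolod I)
    (hq : I.colon J = I.colon ((J ^ 2 : Ideal (MvPolynomial (Fin n) K)) : Set (MvPolynomial (Fin n) K))) :
    StronglyDGolod (I.colon J) := by
  intro a b ha hb i j hi hj
  rw [hq]
  refine monomial_mem_colon_sq hJ fun m₁ m₂ h₁ h₂ => ?_
  have hab : Finsupp.single i 1 + Finsupp.single j 1 ≤ a + b :=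
    Finsupp.single_add_single_le_add hi hj
  rw [tsub_tsub, tsub_add_eq_add_tsub hab, add_add_add_comm, ← tsub_tsub]
  exact hIG _ _ (monomial_add_mem_of_mem_colon ha h₁) (monomial_add_mem_of_mem_colon hb h₂) i j
    (by simp [hi]) (by simp [hj])

/-- If `I` is a strongly d-Golod monomial ideal and `J` a monomial ideal with
`I : J = I : J²`, then `I : J` is strongly d-Golod. -/
theorem stronglyDGolod_colon {K : Type*} [Field K] {n : ℕ}
    (I J : Ideal (MvPolynomial (Fin n) K))
    (hI : IsMonomialIdeal I) (hJ : IsMonomialIdeal J)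
    (hIG : StronglyDGolod I)
    (hq : I.colon J = I.colon ((J ^ 2 : Ideal (MvPolynomial (Fin n) K)) : Set (MvPolynomial (Fin n) K))) :
    StronglyDGolod (I.colon J) :=
  stronglyDGolod_colon_general I J hJ hIG hq
end

section
/- For any monomial ideal I in K[x_1,...,x_n] and any integer k ≥ 2, the power I^k is strongly d-Golod: for all monomials u, v ∈ I^k and indices i, j with x_i | u and x_j | v, one has uv/(x_i x_j) ∈ I^k. -/
open Finset Finsupp

namespace Finsupp

variable {ι σ : Type*} [Fintype ι]

lemma add_single_one_le {x a : σ →₀ ℕ} {i : σ} (hle : x ≤ a) (hlt : x i < a i) :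
    x + single i 1 ≤ a := by
  intro l
  by_cases h : l = i
  · subst h
    simpa [Nat.add_one_le_iff] using hlt
  · simpa [single_apply, Ne.symm h] using hle l

lemma exists_sum_erase_add_single_le [DecidableEq ι] [Nonempty ι] {f : ι → σ →₀ ℕ}
    {a : σ →₀ ℕ} {i : σ} (hf : ∑ t, f t ≤ a) (hai : a i ≠ 0) :
    ∃ t, ∑ t' ∈ univ.erase t, f t' + single i 1 ≤ a := by
  have hsub (t : ι) : ∑ t' ∈ univ.erase t, f t' ≤ a :=
    (sum_le_sum_of_subset (erase_subset t univ)).trans hf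
  by_cases h : ∃ t, f t i ≠ 0
  · obtain ⟨t, ht⟩ := h
    refine ⟨t, add_single_one_le (hsub t) ?_⟩
    have hfi := hf i
    rw [← sum_erase_add univ f (mem_univ t)] at hfi
    simp only [coe_add, Pi.add_apply] at hfi
    omega
  · push Not at h
    obtain ⟨t⟩ := ‹Nonempty ι›
    refine ⟨t, add_single_one_le (hsub t) ?_⟩
    simpa [finsetSum_apply, h] using Nat.pos_of_ne_zero hai

lemma exists_add_single_le (hι : 1 < Fintype.card ι) {g : ι → σ →₀ ℕ} {b : σ →₀ ℕ} {j : σ}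
    (hg : ∑ s, g s ≤ b) (hbj : b j ≠ 0) : ∃ s, g s + single j 1 ≤ b := by
  classical
  by_cases h : ∃ s, g s j = 0
  · obtain ⟨s, hs⟩ := h
    refine ⟨s, add_single_one_le ?_ ?_⟩
    · exact (single_le_sum_of_canonicallyOrdered (mem_univ s)).trans hg
    · omega
  · push Not at h
    obtain ⟨s, s', hss'⟩ := Fintype.exists_pair_of_one_lt_card hι
    have hpair : g s + g s' ≤ b := by
      rw [← sum_pair hss']
      exact (sum_le_sum_of_subset (subset_univ _)).trans hg
    refine ⟨s, add_single_one_le (le_self_add.trans hpair) ?_⟩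
    have hj := hpair j
    have hs' := h s'
    simp only [coe_add, Pi.add_apply] at hj ⊢
    omega

lemma exists_sum_update_le [DecidableEq ι] (hι : 1 < Fintype.card ι) {f g : ι → σ →₀ ℕ}
    {a b : σ →₀ ℕ} {i j : σ} (hf : ∑ t, f t ≤ a) (hg : ∑ s, g s ≤ b) (hai : a i ≠ 0)
    (hbj : b j ≠ 0) :
    ∃ t s, ∑ t', Function.update f t (g s) t' ≤ a + b - single i 1 - single j 1 := by
  have : Nonempty ι := Fintype.card_pos_iff.1 (by omega)
  obtain ⟨t, ht⟩ := exists_sum_erase_add_single_le hf hai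
  obtain ⟨s, hs⟩ := exists_add_single_le hι hg hbj
  refine ⟨t, s, ?_⟩
  rw [sum_update_of_mem (mem_univ t), sdiff_singleton_eq_erase]
  refine le_tsub_of_add_le_right (le_tsub_of_add_le_right ?_)
  calc g s + ∑ t' ∈ univ.erase t, f t' + single j 1 + single i 1
      = (∑ t' ∈ univ.erase t, f t' + single i 1) + (g s + single j 1) := by abel
    _ ≤ a + b := add_le_add ht hs

end Finsupp

namespace MvPolynomial

open Pointwise

variable {σ R : Type*} [CommSemiring R]

lemma span_monomial_image_pow (A : Set (σ →₀ ℕ)) (k : ℕ) :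
    Ideal.span ((monomial · (1 : R)) '' A) ^ k = Ideal.span ((monomial · (1 : R)) '' (k • A)) := by
  induction k with
  | zero => simp [Ideal.one_eq_top]
  | succ k ih =>
    rw [pow_succ, ih, Ideal.span_mul_span', succ_nsmul]
    congr 1
    ext p
    simp [Set.mem_mul, Set.mem_add]

lemma monomial_mem_span_monomial_image_pow_iff [Nontrivial R] {A : Set (σ →₀ ℕ)} {k : ℕ}
    {a : σ →₀ ℕ} :
    monomial a (1 : R) ∈ Ideal.span ((monomial · (1 : R)) '' A) ^ k ↔
      ∃ f : Fin k → σ →₀ ℕ, (∀ t, f t ∈ A) ∧ ∑ t, f t ≤ a := by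
  classical
  rw [span_monomial_image_pow, mem_ideal_span_monomial_image, support_monomial,
    if_neg one_ne_zero]
  simp only [Finset.mem_singleton, forall_eq, Set.mem_nsmul, List.sum_ofFn]
  constructor
  · rintro ⟨_, ⟨f, rfl⟩, hle⟩
    exact ⟨fun t => f t, fun t => (f t).2, hle⟩
  · rintro ⟨f, hf, hle⟩
    exact ⟨_, ⟨fun t => ⟨f t, hf t⟩, rfl⟩, hle⟩

end MvPolynomial

open MvPolynomial

namespace IsMonomialIdeal

variable {K : Type*} [Field K] {n : ℕ} {I : Ideal (MvPolynomial (Fin n) K)}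

lemma eq_span (hI : IsMonomialIdeal I) :
    I = Ideal.span ((monomial · (1 : K)) '' {m | monomial m 1 ∈ I}) := by
  refine le_antisymm (fun f hf => mem_ideal_span_monomial_image.2 fun m hm => ?_) ?_
  · exact ⟨m, hI f hf m hm, le_rfl⟩
  · rw [Ideal.span_le]
    rintro _ ⟨m, hm, rfl⟩
    exact hm

lemma monomial_mem_pow_iff (hI : IsMonomialIdeal I) {k : ℕ} {a : Fin n →₀ ℕ} :
    monomial a (1 : K) ∈ I ^ k ↔
      ∃ f : Fin k → Fin n →₀ ℕ, (∀ t, monomial (f t) (1 : K) ∈ I) ∧ ∑ t, f t ≤ a := by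
  conv_lhs => rw [hI.eq_span]
  exact monomial_mem_span_monomial_image_pow_iff

end IsMonomialIdeal

/-- For any monomial ideal `I` of `K[x_1,…,x_n]` and any `k ≥ 2`, the power `I^k` is
strongly d-Golod. -/
theorem stronglyDGolod_pow {K : Type*} [Field K] {n : ℕ}
    (I : Ideal (MvPolynomial (Fin n) K)) (hI : IsMonomialIdeal I)
    (k : ℕ) (hk : 2 ≤ k) :
    StronglyDGolod (I ^ k) := by
  intro a b ha hb i j hai hbj
  obtain ⟨f, hfI, hfa⟩ := hI.monomial_mem_pow_iff.1 ha
  obtain ⟨g, hgI, hgb⟩ := hI.monomial_mem_pow_iff.1 hb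
  obtain ⟨t, s, hle⟩ := exists_sum_update_le (by rwa [Fintype.card_fin]) hfa hgb hai hbj
  refine hI.monomial_mem_pow_iff.2 ⟨_, ?_, hle⟩
  exact (Function.forall_update_iff f fun _ m => monomial m (1 : K) ∈ I).2
    ⟨hgI s, fun t' _ => hfI t'⟩
end

section
/- Let I be a strongly d-Golod monomial ideal in K[x_1,...,x_n] and J any monomial ideal. Then the saturation ∪_{t≥1} (I : J^t) of I with respect to J is strongly d-Golod. In particular, for any monomial ideal I and k ≥ 2, the saturation of I^k with respect to the maximal ideal is strongly d-Golod. -/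
/-!
If `u J^s ⊆ I` and `v J^t ⊆ I`, then for monomials `ρ, π ∈ J^{max(s,t)}` the strong
d-Golod property of `I`, applied to `uρ` and `vπ`, gives `(uv / x_i x_j) ρπ ∈ I`; as these
products `ρπ` generate `J^{2 max(s,t)}`, the monomial `uv / x_i x_j` lies in the saturation.

For the second claim it suffices that `A^k` is strongly d-Golod for a monomial ideal `A` and
`k ≥ 2`: dividing a monomial of `A^{k+1}` by one of its variables leaves a monomial of `A^k`, so
`(u / x_i)(v / x_j) ∈ A^{2k-2} ⊆ A^k`.
-/

open MvPolynomial Pointwise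

theorem Finsupp.add_tsub_single_tsub_single {σ : Type*} {a b : σ →₀ ℕ} {i j : σ}
    (hai : a i ≠ 0) (hbj : b j ≠ 0) :
    a + b - single i 1 - single j 1 = (a - single i 1) + (b - single j 1) := by
  rw [tsub_add_eq_add_tsub (single_le_iff.2 (Nat.pos_of_ne_zero hai)),
    ← add_tsub_assoc_of_le (single_le_iff.2 (Nat.pos_of_ne_zero hbj)), tsub_right_comm]

theorem Finsupp.le_tsub_single_of_le {σ : Type*} {a c : σ →₀ ℕ} {i : σ} (hac : a ≤ c)
    (hai : a i = 0) (hci : c i ≠ 0) : a ≤ c - single i 1 := by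
  rw [le_tsub_iff_right (single_le_iff.2 (Nat.pos_of_ne_zero hci)), le_def]
  intro x
  rcases eq_or_ne i x with rfl | hix
  · simpa [hai] using Nat.one_le_iff_ne_zero.2 hci
  · simpa [single_apply, hix] using hac x

section Colon

variable {R : Type*} [CommSemiring R]

theorem Ideal.colon_pow_mono (I J : Ideal R) :
    Monotone fun t : ℕ => I.colon ((J ^ t : Ideal R) : Set R) :=
  fun _ _ hst => Submodule.colon_mono le_rfl (SetLike.coe_subset_coe.2 (Ideal.pow_le_pow_right hst))

theorem Ideal.mem_iSup_colon_pow {I J : Ideal R} {x : R} :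
    x ∈ ⨆ t ∈ Set.Ici 1, I.colon ((J ^ t : Ideal R) : Set R) ↔
      ∃ t, x ∈ I.colon ((J ^ t : Ideal R) : Set R) := by
  have hmono := I.colon_pow_mono J
  have hsup : ⨆ t ∈ Set.Ici 1, I.colon ((J ^ t : Ideal R) : Set R) =
      ⨆ t : ℕ, I.colon ((J ^ t : Ideal R) : Set R) :=
    le_antisymm (iSup₂_le fun t _ => le_iSup_of_le t le_rfl)
      (iSup_le fun t => (hmono t.le_succ).trans (le_iSup₂_of_le (t + 1) (by simp) le_rfl))
  rw [hsup, Submodule.mem_iSup_of_directed _ hmono.directed_le]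

end Colon

namespace MvPolynomial

variable {σ R : Type*} [CommSemiring R]

theorem monomial_mem_of_le {A : Ideal (MvPolynomial σ R)} {a c : σ →₀ ℕ}
    (ha : monomial a (1 : R) ∈ A) (hac : a ≤ c) : monomial c (1 : R) ∈ A := by
  simpa [monomial_mul, tsub_add_cancel_of_le hac] using A.mul_mem_left (monomial (c - a) 1) ha

theorem monomial_add_mem_mul {A B : Ideal (MvPolynomial σ R)} {a b : σ →₀ ℕ}
    (ha : monomial a (1 : R) ∈ A) (hb : monomial b (1 : R) ∈ B) :
    monomial (a + b) (1 : R) ∈ A * B := by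
  simpa [monomial_mul] using Ideal.mul_mem_mul ha hb

end MvPolynomial

section MonomialIdeal

variable {K : Type*} [Field K] {n : ℕ}

def monomialExponents (A : Ideal (MvPolynomial (Fin n) K)) : Set (Fin n →₀ ℕ) :=
  {a | monomial a (1 : K) ∈ A}

theorem isMonomialIdeal_span_monomial (s : Set (Fin n →₀ ℕ)) :
    IsMonomialIdeal (Ideal.span ((fun a => monomial a (1 : K)) '' s)) := by
  intro f hf m hm
  obtain ⟨a, ha, ham⟩ := mem_ideal_span_monomial_image.1 hf m hm
  refine mem_ideal_span_monomial_image.2 fun m' hm' => ⟨a, ha, ?_⟩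
  rwa [Finset.mem_singleton.1 (support_monomial_subset hm')]

theorem isMonomialIdeal_span_range_X :
    IsMonomialIdeal (Ideal.span (Set.range (X : Fin n → MvPolynomial (Fin n) K))) := by
  have hX : (X : Fin n → MvPolynomial (Fin n) K) =
      (fun a => monomial a (1 : K)) ∘ fun i => Finsupp.single i 1 := rfl
  rw [hX, Set.range_comp]
  exact isMonomialIdeal_span_monomial _

namespace IsMonomialIdeal

variable {A B : Ideal (MvPolynomial (Fin n) K)}

theorem eq_span_s13 (hA : IsMonomialIdeal A) :
    A = Ideal.span ((fun a => monomial a (1 : K)) '' monomialExponents A) :=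
  le_antisymm
    (fun f hf => mem_ideal_span_monomial_image.2 fun m hm => ⟨m, hA f hf m hm, le_rfl⟩)
    (Ideal.span_le.2 (Set.image_subset_iff.2 fun _ ha => ha))

theorem mul_eq_span (hA : IsMonomialIdeal A) (hB : IsMonomialIdeal B) :
    A * B = Ideal.span ((fun a => monomial a (1 : K)) ''
      (monomialExponents A + monomialExponents B)) := by
  conv_lhs => rw [hA.eq_span_s13, hB.eq_span_s13, Ideal.span_mul_span']
  congr 1
  exact (Set.image_image2_distrib (f := (· + ·)) (g := fun a => monomial a (1 : K))
    (f' := (· * ·)) fun a b => by rw [monomial_mul, one_mul]).symm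

theorem mul (hA : IsMonomialIdeal A) (hB : IsMonomialIdeal B) : IsMonomialIdeal (A * B) :=
  hA.mul_eq_span hB ▸ isMonomialIdeal_span_monomial _

theorem pow (hA : IsMonomialIdeal A) : ∀ k : ℕ, IsMonomialIdeal (A ^ k)
  | 0 => by simpa using isMonomialIdeal_span_monomial (K := K) (n := n) {0}
  | k + 1 => pow_succ A k ▸ (hA.pow k).mul hA

theorem exists_add_le_of_monomial_mem_mul (hA : IsMonomialIdeal A) (hB : IsMonomialIdeal B)
    {c : Fin n →₀ ℕ} (hc : monomial c (1 : K) ∈ A * B) :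
    ∃ a ∈ monomialExponents A, ∃ b ∈ monomialExponents B, a + b ≤ c := by
  rw [hA.mul_eq_span hB, mem_ideal_span_monomial_image] at hc
  obtain ⟨_, ⟨a, ha, b, hb, rfl⟩, hle⟩ := hc c (by simp)
  exact ⟨a, ha, b, hb, hle⟩

theorem monomial_tsub_single_mem_pow (hA : IsMonomialIdeal A) {i : Fin n} :
    ∀ {k : ℕ} {c : Fin n →₀ ℕ}, monomial c (1 : K) ∈ A ^ (k + 1) → c i ≠ 0 →
      monomial (c - Finsupp.single i 1) (1 : K) ∈ A ^ k
  | 0, _, _, _ => by simp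
  | k + 1, c, hc, hci => by
    obtain ⟨a, ha, b, hb, habc⟩ :=
      (hA.pow (k + 1)).exists_add_le_of_monomial_mem_mul hA (pow_succ A (k + 1) ▸ hc)
    by_cases hai : a i = 0
    · exact monomial_mem_of_le ha (Finsupp.le_tsub_single_of_le (le_self_add.trans habc) hai hci)
    · refine monomial_mem_of_le (pow_succ A k ▸ monomial_add_mem_mul
        (monomial_tsub_single_mem_pow hA ha hai) hb) ?_
      rw [tsub_add_eq_add_tsub (Finsupp.single_le_iff.2 (Nat.pos_of_ne_zero hai))]
      exact tsub_le_tsub_right habc _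

theorem stronglyDGolod_pow (hA : IsMonomialIdeal A) {k : ℕ} (hk : 2 ≤ k) :
    StronglyDGolod (A ^ k) := by
  obtain ⟨m, rfl⟩ : ∃ m, k = m + 1 + 1 := ⟨k - 2, by omega⟩
  intro a b ha hb i j hai hbj
  have hab := monomial_add_mem_mul (hA.monomial_tsub_single_mem_pow ha hai)
    (hA.monomial_tsub_single_mem_pow hb hbj)
  rw [← pow_add, ← Finsupp.add_tsub_single_tsub_single hai hbj] at hab
  exact Ideal.pow_le_pow_right (by omega) hab

end IsMonomialIdeal

namespace StronglyDGolod

variable {I J : Ideal (MvPolynomial (Fin n) K)}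

theorem monomial_mem_colon_mul (hI : StronglyDGolod I) {A : Ideal (MvPolynomial (Fin n) K)}
    (hA : IsMonomialIdeal A) {a b : Fin n →₀ ℕ} (ha : monomial a (1 : K) ∈ I.colon A)
    (hb : monomial b (1 : K) ∈ I.colon A) {i j : Fin n} (hai : a i ≠ 0) (hbj : b j ≠ 0) :
    monomial (a + b - Finsupp.single i 1 - Finsupp.single j 1) (1 : K) ∈
      I.colon ((A * A : Ideal (MvPolynomial (Fin n) K)) : Set (MvPolynomial (Fin n) K)) := by
  rw [Finsupp.add_tsub_single_tsub_single hai hbj]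
  set c := (a - Finsupp.single i 1) + (b - Finsupp.single j 1)
  suffices hAA : A * A ≤ I.colon {monomial c (1 : K)} from
    Submodule.mem_colon.2 fun p hp => by simpa [mul_comm] using hAA hp
  rw [hA.mul_eq_span hA, Ideal.span_le]
  rintro _ ⟨_, ⟨ρ, hρ, π, hπ, rfl⟩, rfl⟩
  have haρ : monomial (a + ρ) (1 : K) ∈ I := by
    simpa [monomial_mul] using Submodule.mem_colon.1 ha _ hρ
  have hbπ : monomial (b + π) (1 : K) ∈ I := by
    simpa [monomial_mul] using Submodule.mem_colon.1 hb _ hπ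
  have haρi : (a + ρ) i ≠ 0 := by simp only [Finsupp.add_apply]; omega
  have hbπj : (b + π) j ≠ 0 := by simp only [Finsupp.add_apply]; omega
  have key := hI (a + ρ) (b + π) haρ hbπ i j haρi hbπj
  rw [Finsupp.add_tsub_single_tsub_single haρi hbπj,
    ← tsub_add_eq_add_tsub (Finsupp.single_le_iff.2 (Nat.pos_of_ne_zero hai)),
    ← tsub_add_eq_add_tsub (Finsupp.single_le_iff.2 (Nat.pos_of_ne_zero hbj)),
    add_add_add_comm] at key
  simpa only [SetLike.mem_coe, Submodule.mem_colon_singleton, smul_eq_mul, monomial_mul,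
    one_mul, add_comm] using key

theorem iSup_colon_pow (hI : StronglyDGolod I) (hJ : IsMonomialIdeal J) :
    StronglyDGolod (⨆ t ∈ Set.Ici 1,
      I.colon ((J ^ t : Ideal (MvPolynomial (Fin n) K)) : Set (MvPolynomial (Fin n) K))) := by
  intro a b ha hb i j hai hbj
  obtain ⟨s, hs⟩ := Ideal.mem_iSup_colon_pow.1 ha
  obtain ⟨t, ht⟩ := Ideal.mem_iSup_colon_pow.1 hb
  have hst := hI.monomial_mem_colon_mul (hJ.pow _) (I.colon_pow_mono J (le_max_left s t) hs)
    (I.colon_pow_mono J (le_max_right s t) ht) hai hbj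
  rw [← pow_add] at hst
  exact Ideal.mem_iSup_colon_pow.2 ⟨_, hst⟩

end StronglyDGolod

end MonomialIdeal

theorem stronglyDGolod_saturation_general {K : Type*} [Field K] {n : ℕ}
    (I J : Ideal (MvPolynomial (Fin n) K))
    (hJ : IsMonomialIdeal J)
    (hIG : StronglyDGolod I) :
    StronglyDGolod (⨆ t ∈ Set.Ici 1, I.colon ((J ^ t : Ideal (MvPolynomial (Fin n) K)) : Set (MvPolynomial (Fin n) K))) ∧
    ∀ I' : Ideal (MvPolynomial (Fin n) K), IsMonomialIdeal I' → ∀ k : ℕ, 2 ≤ k →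
      StronglyDGolod (⨆ t ∈ Set.Ici 1,
        (I' ^ k).colon (((Ideal.span (Set.range (MvPolynomial.X : Fin n → MvPolynomial (Fin n) K))) ^ t : Ideal (MvPolynomial (Fin n) K)) : Set (MvPolynomial (Fin n) K))) :=
  ⟨hIG.iSup_colon_pow hJ, fun _ hI' _ hk =>
    (hI'.stronglyDGolod_pow hk).iSup_colon_pow isMonomialIdeal_span_range_X⟩

/-- If `I` is a strongly d-Golod monomial ideal and `J` any monomial ideal, then the
saturation `⋃_{t≥1} (I : J^t)` of `I` with respect to `J` is strongly d-Golod.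
In particular, for any monomial ideal `I` and `k ≥ 2`, the saturation of `I^k` with
respect to the maximal ideal `(x_1,…,x_n)` is strongly d-Golod. -/
theorem stronglyDGolod_saturation {K : Type*} [Field K] {n : ℕ}
    (I J : Ideal (MvPolynomial (Fin n) K))
    (hI : IsMonomialIdeal I) (hJ : IsMonomialIdeal J)
    (hIG : StronglyDGolod I) :
    StronglyDGolod (⨆ t ∈ Set.Ici 1, I.colon ((J ^ t : Ideal (MvPolynomial (Fin n) K)) : Set (MvPolynomial (Fin n) K))) ∧
    ∀ I' : Ideal (MvPolynomial (Fin n) K), IsMonomialIdeal I' → ∀ k : ℕ, 2 ≤ k →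
      StronglyDGolod (⨆ t ∈ Set.Ici 1,
        (I' ^ k).colon (((Ideal.span (Set.range (MvPolynomial.X : Fin n → MvPolynomial (Fin n) K))) ^ t : Ideal (MvPolynomial (Fin n) K)) : Set (MvPolynomial (Fin n) K))) :=
  stronglyDGolod_saturation_general I J hJ hIG
end

section
/- Let I ⊆ J be monomial ideals in K[x_1,...,x_n] with I strongly d-Golod. Then IJ is strongly d-Golod: for all monomials w_1, w_2 ∈ IJ and variables x_i | w_1, x_j | w_2, one has w_1 w_2/(x_i x_j) ∈ IJ. -/
/-!
Write `w₁ = u₁v₁` and `w₂ = u₂v₂` with `u₁, u₂ ∈ I` and `v₁, v₂ ∈ J`, and let `x_i` divide the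
factor `f` of `w₁` and `x_j` the factor `g` of `w₂`. If `f = u₁` and `g = u₂`, then
`u₁u₂/(x_i x_j) ∈ I` because `I` is strongly d-Golod, and multiplying by `v₁ ∈ J` lands in `IJ`.
Otherwise `fg/(x_i x_j)` is a monomial and the two remaining factors are one from `I` and one
from `J`, where in the case `f = v₁`, `g = v₂` the inclusion `I ⊆ J` puts `u₂` in `J`.
-/

open MvPolynomial

lemma Finsupp.add_add_tsub_single_single {σ : Type*} {f f' g g' : σ →₀ ℕ} {i j : σ}
    (hf : f i ≠ 0) (hg : g j ≠ 0) :
    f + f' + (g + g') - single i 1 - single j 1 =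
      (f + g - single i 1 - single j 1) + (f' + g') := by
  classical
  ext k
  simp only [add_apply, tsub_apply, single_apply]
  split_ifs <;> subst_vars <;> omega

lemma monomial_mem_mul_of_add_le {R σ : Type*} [CommSemiring R]
    {I J : Ideal (MvPolynomial σ R)} {u v a : σ →₀ ℕ}
    (hu : monomial u (1 : R) ∈ I) (hv : monomial v (1 : R) ∈ J) (h : u + v ≤ a) :
    monomial a (1 : R) ∈ I * J := by
  refine Ideal.mem_of_dvd _ (monomial_dvd_monomial.mpr ⟨Or.inr h, one_dvd _⟩) ?_
  rw [← one_mul (1 : R), ← monomial_mul]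
  exact Ideal.mul_mem_mul hu hv

section MonomialIdeal

variable {K : Type*} [Field K] {n : ℕ} {I J : Ideal (MvPolynomial (Fin n) K)}

lemma IsMonomialIdeal.exists_add_eq_of_mem_support_of_mem_mul
    (hI : IsMonomialIdeal I) (hJ : IsMonomialIdeal J) {f : MvPolynomial (Fin n) K}
    (hf : f ∈ I * J) : ∀ m ∈ f.support,
      ∃ u v, monomial u (1 : K) ∈ I ∧ monomial v (1 : K) ∈ J ∧ m = u + v := by
  refine Submodule.mul_induction_on hf ?_ ?_
  · intro p hp q hq m hm
    obtain ⟨u, hu, v, hv, rfl⟩ := Finset.mem_add.mp (support_mul p q hm)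
    exact ⟨u, v, hI p hp u hu, hJ q hq v hv, rfl⟩
  · intro p q hp hq m hm
    exact (Finset.mem_union.mp (Finsupp.support_add hm)).elim (hp m) (hq m)

lemma IsMonomialIdeal.exists_add_eq_of_monomial_mem_mul
    (hI : IsMonomialIdeal I) (hJ : IsMonomialIdeal J) {a : Fin n →₀ ℕ}
    (ha : monomial a (1 : K) ∈ I * J) :
    ∃ u v, monomial u (1 : K) ∈ I ∧ monomial v (1 : K) ∈ J ∧ a = u + v :=
  hI.exists_add_eq_of_mem_support_of_mem_mul hJ ha a (by simp)

end MonomialIdeal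

/-- If `I ⊆ J` are monomial ideals with `I` strongly d-Golod, then `IJ` is strongly
d-Golod. -/
theorem stronglyDGolod_mul {K : Type*} [Field K] {n : ℕ}
    (I J : Ideal (MvPolynomial (Fin n) K))
    (hI : IsMonomialIdeal I) (hJ : IsMonomialIdeal J)
    (hIJ : I ≤ J) (hIG : StronglyDGolod I) :
    StronglyDGolod (I * J) := by
  intro a b ha hb i j hai hbj
  obtain ⟨u₁, v₁, hu₁, hv₁, rfl⟩ := hI.exists_add_eq_of_monomial_mem_mul hJ ha
  obtain ⟨u₂, v₂, hu₂, hv₂, rfl⟩ := hI.exists_add_eq_of_monomial_mem_mul hJ hb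
  rw [Finsupp.add_apply, Ne, add_eq_zero, not_and_or] at hai hbj
  rcases hai with h₁ | h₁ <;> rcases hbj with h₂ | h₂
  · rw [Finsupp.add_add_tsub_single_single h₁ h₂]
    exact monomial_mem_mul_of_add_le (hIG _ _ hu₁ hu₂ i j h₁ h₂) hv₁ (by gcongr; exact le_self_add)
  · rw [add_comm u₂, Finsupp.add_add_tsub_single_single h₁ h₂, add_comm v₁]
    exact monomial_mem_mul_of_add_le hu₂ hv₁ le_add_self
  · rw [add_comm u₁, Finsupp.add_add_tsub_single_single h₁ h₂]
    exact monomial_mem_mul_of_add_le hu₁ hv₂ le_add_self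
  · rw [add_comm u₁, add_comm u₂, Finsupp.add_add_tsub_single_single h₁ h₂]
    exact monomial_mem_mul_of_add_le hu₁ (hIJ hu₂) le_add_self
end

section
/- Let I = (x_1,...,x_{n-1})² + x_n·(x_1,...,x_{n-1}) + (x_n^{s+1}) in S = K[x_1,...,x_n], or I = (x_1,...,x_{n-1})² + x_n·(x_1,...,x_{n-1}). In either case, letting σ be the permutation ordering the variables as x_n, x_1, ..., x_{n-1}, one has d_σ(I) = (x_1,...,x_{n-1}, x_n^s) in the first case and d_σ(I) = (x_1,...,x_{n-1}) in the second, and in both cases d_σ(I)² ⊆ I, so I is d_σ-Golod. -/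
/-!
Renaming the variables by `σ⁻¹` turns `x_n, x_1, …, x_{n-1}` into `y_0, y_1, …, y_n`, so that
`d_σ` becomes the plain operator `d`, and both ideals become monomial ideals built from
`P = (y_1, …, y_n)` and `y_0`. The operator `d^r` divides each monomial whose smallest variable
is `y_r` by `y_r` and kills the others. A monomial of `P² + y_0 P` involves some `y_i`, `i ≥ 1`,
and has degree at least two; dividing it by its smallest variable keeps such a `y_i` (for `r = 0`
no `y_i` is touched, for `r ≥ 1` there is no `y_0` and the quotient is not constant). Likewise
`y_0^{s+1}` only loses one factor `y_0`. Conversely `d^0(y_0 g) = g` produces the generators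
`y_i` and `y_0^s`. Golodness is then the ideal computation
`(P + (y_0^s))² ⊆ P² + y_0 P + (y_0^{s+1})`, valid for `s ≥ 1`.
-/

open Classical in
/-- The operator `d^r` on `K[x_1,…,x_n]`: for `f` in the maximal ideal it is the unique
family with `f = Σ_r d^r(f)·x_r` and `d^r(f) ∈ K[x_r,…,x_n]`; on a monomial whose
smallest variable is `x_r` it divides by `x_r`, and it kills all other monomials. -/
noncomputable def dPoly {K : Type*} [Field K] {n : ℕ} (r : Fin n)
    (f : MvPolynomial (Fin n) K) : MvPolynomial (Fin n) K :=
  ∑ m ∈ f.support.filter (fun m => (∀ i : Fin n, i < r → m i = 0) ∧ m r ≠ 0),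
    MvPolynomial.monomial (m - Finsupp.single r 1) (MvPolynomial.coeff m f)

/-- The operator `d_σ^i` for a permutation `σ` of the variables:
`d_σ^i(f) = σ(d^i(f(x_{σ⁻¹(1)},…,x_{σ⁻¹(n)})))`. -/
noncomputable def dSigmaPoly {K : Type*} [Field K] {n : ℕ} (σ : Equiv.Perm (Fin n))
    (i : Fin n) (f : MvPolynomial (Fin n) K) : MvPolynomial (Fin n) K :=
  MvPolynomial.rename σ (dPoly i (MvPolynomial.rename σ.symm f))

/-- `d_σ(I)` is the ideal generated by the elements `d_σ^i(f)` with `f ∈ I`. -/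
noncomputable def dIdealSigma {K : Type*} [Field K] {n : ℕ} (σ : Equiv.Perm (Fin n))
    (I : Ideal (MvPolynomial (Fin n) K)) : Ideal (MvPolynomial (Fin n) K) :=
  Ideal.span {g | ∃ f ∈ I, ∃ i : Fin n, g = dSigmaPoly σ i f}

section UpperSet

variable {ι : Type*}

theorem isUpperSet_setOf_exists_apply_ne_zero (A : Set ι) :
    IsUpperSet {m : ι →₀ ℕ | ∃ i ∈ A, m i ≠ 0} := by
  rintro a b hle ⟨i, hi, h⟩
  exact ⟨i, hi, fun h' => h (Nat.eq_zero_of_le_zero (h' ▸ hle i))⟩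

theorem isUpperSet_setOf_le_apply (i : ι) (k : ℕ) : IsUpperSet {m : ι →₀ ℕ | k ≤ m i} :=
  fun _ _ hle h => le_trans h (hle i)

end UpperSet

namespace MvPolynomial

variable {ι R : Type*} [CommSemiring R] {s t : Set (ι →₀ ℕ)}

theorem mem_restrictSupportIdeal_iff {hs : IsUpperSet s} {p : MvPolynomial ι R} :
    p ∈ restrictSupportIdeal R s hs ↔ ∀ m ∈ p.support, m ∈ s :=
  Iff.rfl

theorem restrictSupportIdeal_mono {hs : IsUpperSet s} {ht : IsUpperSet t} (h : s ⊆ t) :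
    restrictSupportIdeal R s hs ≤ restrictSupportIdeal R t ht :=
  fun _ hp _ hm => h (hp hm)

theorem restrictSupportIdeal_le_of_monomial_mem {hs : IsUpperSet s}
    {I : Ideal (MvPolynomial ι R)} (h : ∀ m ∈ s, monomial m 1 ∈ I) :
    restrictSupportIdeal R s hs ≤ I := by
  intro p hp
  have hp' : p ∈ restrictSupport R s := hp
  rw [restrictSupport_eq_span] at hp'
  exact (Submodule.span_le (p := I.restrictScalars R)).mpr
    (by rintro _ ⟨m, hm, rfl⟩; exact h m hm) hp'

theorem restrictSupportIdeal_inter (hs : IsUpperSet s) (ht : IsUpperSet t) :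
    restrictSupportIdeal R (s ∩ t) (hs.inter ht) =
      restrictSupportIdeal R s hs ⊓ restrictSupportIdeal R t ht := by
  ext p
  simp only [Ideal.mem_inf, mem_restrictSupportIdeal_iff, Set.mem_inter_iff]
  exact ⟨fun h => ⟨fun m hm => (h m hm).1, fun m hm => (h m hm).2⟩,
    fun h m hm => ⟨h.1 m hm, h.2 m hm⟩⟩

theorem restrictSupportIdeal_union (hs : IsUpperSet s) (ht : IsUpperSet t) :
    restrictSupportIdeal R (s ∪ t) (hs.union ht) =
      restrictSupportIdeal R s hs ⊔ restrictSupportIdeal R t ht := by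
  refine le_antisymm (restrictSupportIdeal_le_of_monomial_mem fun m hm => ?_)
    (sup_le (restrictSupportIdeal_mono Set.subset_union_left)
      (restrictSupportIdeal_mono Set.subset_union_right))
  rcases hm with hm | hm
  · exact Ideal.mem_sup_left ((monomial_mem_restrictSupport (R := R)).mpr (Or.inl hm))
  · exact Ideal.mem_sup_right ((monomial_mem_restrictSupport (R := R)).mpr (Or.inl hm))

theorem span_X_image_eq_restrictSupportIdeal (A : Set ι) :
    Ideal.span (X '' A : Set (MvPolynomial ι R)) = restrictSupportIdeal R {m | ∃ i ∈ A, m i ≠ 0}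
      (isUpperSet_setOf_exists_apply_ne_zero A) := by
  ext p
  rw [mem_ideal_span_X_image, mem_restrictSupportIdeal_iff]
  rfl

theorem span_X_pow_eq_restrictSupportIdeal (i : ι) (k : ℕ) :
    Ideal.span {(X i : MvPolynomial ι R) ^ k} = restrictSupportIdeal R {m | k ≤ m i}
      (isUpperSet_setOf_le_apply i k) := by
  ext p
  rw [X_pow_eq_monomial, ← Set.image_singleton (f := fun m => monomial m (1 : R)),
    mem_ideal_span_monomial_image, mem_restrictSupportIdeal_iff]
  simp only [Set.mem_singleton_iff, exists_eq_left, Finsupp.single_le_iff]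
  rfl

end MvPolynomial

open MvPolynomial

section dPoly

variable {K : Type*} [Field K] {n : ℕ}

theorem coeff_dPoly (r : Fin n) (f : MvPolynomial (Fin n) K) (m : Fin n →₀ ℕ) :
    coeff m (dPoly r f) = if ∀ i < r, m i = 0 then coeff (m + Finsupp.single r 1) f else 0 := by
  classical
  have key : ∀ m' : Fin n →₀ ℕ, m' r ≠ 0 →
      (m' - Finsupp.single r 1 = m ↔ m' = m + Finsupp.single r 1) := fun m' hm' => by
    rw [tsub_eq_iff_eq_add_of_le (Finsupp.single_le_iff.mpr (Nat.one_le_iff_ne_zero.mpr hm'))]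
  have below : (∀ i < r, (m + Finsupp.single r 1 : Fin n →₀ ℕ) i = 0) ↔ ∀ i < r, m i = 0 := by
    refine forall₂_congr fun i hi => ?_
    rw [Finsupp.add_apply, Finsupp.single_eq_of_ne hi.ne, add_zero]
  rw [dPoly, coeff_sum, Finset.sum_congr rfl fun m' hm' => by
    rw [coeff_monomial, if_congr (key m' (Finset.mem_filter.mp hm').2.2) rfl rfl],
    Finset.sum_ite_eq']
  simp only [Finset.mem_filter, mem_support_iff, below]
  split_ifs <;> simp_all

theorem mem_support_dPoly {r : Fin n} {f : MvPolynomial (Fin n) K} {m : Fin n →₀ ℕ} :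
    m ∈ (dPoly r f).support ↔ (∀ i < r, m i = 0) ∧ m + Finsupp.single r 1 ∈ f.support := by
  simp only [mem_support_iff, coeff_dPoly, ne_eq, ite_eq_right_iff, Classical.not_imp]

theorem dPoly_mem_restrictSupport {r : Fin n} {f : MvPolynomial (Fin n) K}
    {s t : Set (Fin n →₀ ℕ)} (hf : f ∈ restrictSupport K s)
    (hst : ∀ m, m + Finsupp.single r 1 ∈ s → (∀ i < r, m i = 0) → m ∈ t) :
    dPoly r f ∈ restrictSupport K t := fun m hm =>
  have ⟨hbelow, hmr⟩ := mem_support_dPoly.mp hm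
  hst m (hf hmr) hbelow

theorem dPoly_zero_X_zero_mul (f : MvPolynomial (Fin (n + 1)) K) : dPoly 0 (X 0 * f) = f := by
  ext m
  rw [coeff_dPoly, if_pos fun i hi => absurd hi (Fin.not_lt_zero i), add_comm m, coeff_X_mul]

theorem dSigmaPoly_one (i : Fin n) (f : MvPolynomial (Fin n) K) :
    dSigmaPoly 1 i f = dPoly i f := by
  simp [dSigmaPoly, ← Equiv.Perm.inv_def]

theorem dIdealSigma_map_rename (σ : Equiv.Perm (Fin n)) (I : Ideal (MvPolynomial (Fin n) K)) :
    dIdealSigma σ (I.map (rename σ)) = (dIdealSigma 1 I).map (rename σ) := by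
  have rename_symm_rename (f : MvPolynomial (Fin n) K) : rename σ.symm (rename σ f) = f :=
    (renameEquiv K σ).symm_apply_apply f
  rw [dIdealSigma, dIdealSigma, Ideal.map_span]
  congr 1
  ext g
  constructor
  · rintro ⟨_, hf, i, rfl⟩
    obtain ⟨f, hfI, rfl⟩ := (Ideal.mem_map_of_equiv (renameEquiv K σ) _).mp hf
    exact ⟨dPoly i f, ⟨f, hfI, i, (dSigmaPoly_one i f).symm⟩,
      by rw [dSigmaPoly, renameEquiv_apply, rename_symm_rename]⟩
  · rintro ⟨_, ⟨f, hf, i, rfl⟩, rfl⟩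
    exact ⟨rename σ f, Ideal.mem_map_of_mem _ hf, i,
      by rw [dSigmaPoly_one, dSigmaPoly, rename_symm_rename]⟩

end dPoly

section FirstVariable

variable {K : Type*} [Field K] {n : ℕ}

variable (K n) in
noncomputable def idealOfSuccVars : Ideal (MvPolynomial (Fin (n + 1)) K) :=
  Ideal.span (Set.range fun i : Fin n => X i.succ)

theorem idealOfSuccVars_eq_restrictSupportIdeal :
    idealOfSuccVars K n = restrictSupportIdeal K {m | ∃ i ∈ Set.range Fin.succ, m i ≠ 0}
      (isUpperSet_setOf_exists_apply_ne_zero _) := by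
  rw [idealOfSuccVars, ← span_X_image_eq_restrictSupportIdeal, ← Set.range_comp]
  rfl

theorem idealOfSuccVars_le_idealOfVars : idealOfSuccVars K n ≤ idealOfVars (Fin (n + 1)) K :=
  Ideal.span_mono (Set.range_comp_subset_range Fin.succ X)

theorem sq_add_span_X_zero_mul_le_inf :
    idealOfSuccVars K n ^ 2 + Ideal.span {X 0} * idealOfSuccVars K n ≤
      idealOfSuccVars K n ⊓ idealOfVars (Fin (n + 1)) K ^ 2 := by
  have hX0 : Ideal.span {X 0} ≤ idealOfVars (Fin (n + 1)) K :=
    Ideal.span_mono (Set.singleton_subset_iff.mpr (Set.mem_range_self 0))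
  refine sup_le (le_inf (Ideal.pow_le_self two_ne_zero)
    (Ideal.pow_right_mono idealOfSuccVars_le_idealOfVars 2)) (le_inf Ideal.mul_le_right ?_)
  rw [sq]
  exact Ideal.mul_mono hX0 idealOfSuccVars_le_idealOfVars

theorem exists_succ_ne_zero_of_add_single {m : Fin (n + 1) →₀ ℕ} {r : Fin (n + 1)}
    (hbelow : ∀ i < r, m i = 0)
    (hsucc : ∃ i ∈ Set.range Fin.succ, (m + Finsupp.single r 1 : Fin (n + 1) →₀ ℕ) i ≠ 0)
    (hdeg : 2 ≤ (m + Finsupp.single r 1 : Fin (n + 1) →₀ ℕ).degree) :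
    ∃ i ∈ Set.range Fin.succ, m i ≠ 0 := by
  obtain ⟨_, ⟨j, rfl⟩, hj⟩ := hsucc
  by_cases hr : r = 0
  · subst hr
    exact ⟨_, ⟨j, rfl⟩, by simpa [Finsupp.single_apply, Fin.succ_ne_zero] using hj⟩
  · have hm0 : m 0 = 0 := hbelow 0 (Fin.pos_of_ne_zero hr)
    have hm : m ≠ 0 := by
      rintro rfl
      simp at hdeg
    obtain ⟨k, hk⟩ := Finsupp.support_nonempty_iff.mpr hm
    have hk : m k ≠ 0 := Finsupp.mem_support_iff.mp hk
    obtain ⟨k, rfl⟩ := Fin.exists_succ_eq.mpr (show k ≠ 0 by rintro rfl; exact hk hm0)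
    exact ⟨_, ⟨k, rfl⟩, hk⟩

theorem dPoly_mem_idealOfSuccVars (r : Fin (n + 1)) {f : MvPolynomial (Fin (n + 1)) K}
    (hf : f ∈ idealOfSuccVars K n ^ 2 + Ideal.span {X 0} * idealOfSuccVars K n) :
    dPoly r f ∈ idealOfSuccVars K n := by
  have hf' := sq_add_span_X_zero_mul_le_inf hf
  rw [idealOfSuccVars_eq_restrictSupportIdeal, pow_idealOfVars,
    ← restrictSupportIdeal_inter] at hf'
  rw [idealOfSuccVars_eq_restrictSupportIdeal]
  exact dPoly_mem_restrictSupport hf' fun m hm hbelow =>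
    exists_succ_ne_zero_of_add_single hbelow hm.1 hm.2

theorem dPoly_mem_idealOfSuccVars_add_span_X_zero_pow (s : ℕ) (r : Fin (n + 1))
    {f : MvPolynomial (Fin (n + 1)) K}
    (hf : f ∈ idealOfSuccVars K n ^ 2 + Ideal.span {X 0} * idealOfSuccVars K n +
      Ideal.span {X 0 ^ (s + 1)}) :
    dPoly r f ∈ idealOfSuccVars K n + Ideal.span {X 0 ^ s} := by
  have hf' := sup_le_sup_right sq_add_span_X_zero_mul_le_inf _ hf
  rw [idealOfSuccVars_eq_restrictSupportIdeal, pow_idealOfVars, ← restrictSupportIdeal_inter,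
    span_X_pow_eq_restrictSupportIdeal, ← restrictSupportIdeal_union] at hf'
  rw [Submodule.add_eq_sup, idealOfSuccVars_eq_restrictSupportIdeal,
    span_X_pow_eq_restrictSupportIdeal, ← restrictSupportIdeal_union]
  refine dPoly_mem_restrictSupport hf' fun m hm hbelow => ?_
  rcases hm with ⟨hsucc, hdeg⟩ | hpow
  · exact Or.inl (exists_succ_ne_zero_of_add_single hbelow hsucc hdeg)
  · refine Or.inr (Nat.le_of_succ_le_succ (hpow.trans ?_))
    simp only [Finsupp.add_apply, Finsupp.single_apply]
    split_ifs <;> omega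

theorem mem_dIdealSigma_one_of_X_zero_mul_mem {I : Ideal (MvPolynomial (Fin (n + 1)) K)}
    {g : MvPolynomial (Fin (n + 1)) K} (h : X 0 * g ∈ I) : g ∈ dIdealSigma 1 I :=
  Ideal.subset_span ⟨_, h, 0, by rw [dSigmaPoly_one, dPoly_zero_X_zero_mul]⟩

theorem idealOfSuccVars_le_dIdealSigma_one {I : Ideal (MvPolynomial (Fin (n + 1)) K)}
    (h : Ideal.span {X 0} * idealOfSuccVars K n ≤ I) : idealOfSuccVars K n ≤ dIdealSigma 1 I :=
  Ideal.span_le.mpr <| Set.range_subset_iff.mpr fun i =>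
    mem_dIdealSigma_one_of_X_zero_mul_mem <|
      h (Ideal.mul_mem_mul (Ideal.mem_span_singleton_self _) (Ideal.subset_span ⟨i, rfl⟩))

theorem dIdealSigma_one_le {I J : Ideal (MvPolynomial (Fin n) K)}
    (h : ∀ f ∈ I, ∀ r, dPoly r f ∈ J) : dIdealSigma 1 I ≤ J :=
  Ideal.span_le.mpr fun _ ⟨f, hf, r, hg⟩ => hg ▸ (dSigmaPoly_one r f).symm ▸ h f hf r

theorem dIdealSigma_one_sq_add_span_X_zero_mul :
    dIdealSigma 1 (idealOfSuccVars K n ^ 2 + Ideal.span {X 0} * idealOfSuccVars K n) =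
      idealOfSuccVars K n :=
  le_antisymm (dIdealSigma_one_le fun _ hf r => dPoly_mem_idealOfSuccVars r hf)
    (idealOfSuccVars_le_dIdealSigma_one le_sup_right)

theorem dIdealSigma_one_sq_add_span_X_zero_mul_add_span_X_zero_pow (s : ℕ) :
    dIdealSigma 1 (idealOfSuccVars K n ^ 2 + Ideal.span {X 0} * idealOfSuccVars K n +
      Ideal.span {X 0 ^ (s + 1)}) = idealOfSuccVars K n + Ideal.span {X 0 ^ s} := by
  refine le_antisymm
    (dIdealSigma_one_le fun _ hf r => dPoly_mem_idealOfSuccVars_add_span_X_zero_pow s r hf)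
    (sup_le (idealOfSuccVars_le_dIdealSigma_one (le_sup_right.trans le_sup_left)) ?_)
  refine Ideal.span_le.mpr (Set.singleton_subset_iff.mpr ?_)
  refine mem_dIdealSigma_one_of_X_zero_mul_mem ?_
  rw [← pow_succ']
  exact Ideal.mem_sup_right (Ideal.mem_span_singleton_self _)

end FirstVariable

theorem sq_add_span_pow_le {R : Type*} [CommSemiring R] (P : Ideal R) (x : R) {s : ℕ}
    (hs : s ≠ 0) :
    (P + Ideal.span {x ^ s}) ^ 2 ≤ P ^ 2 + Ideal.span {x} * P + Ideal.span {x ^ (s + 1)} := by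
  have hPx : P * Ideal.span {x ^ s} ≤ Ideal.span {x} * P := by
    rw [mul_comm]
    exact Ideal.mul_mono_left (Ideal.span_singleton_le_span_singleton.mpr (dvd_pow_self x hs))
  have hxx : Ideal.span {x ^ s} * Ideal.span {x ^ s} ≤ Ideal.span {x ^ (s + 1)} := by
    rw [Ideal.span_singleton_mul_span_singleton, ← pow_add]
    exact Ideal.span_singleton_le_span_singleton.mpr (pow_dvd_pow x (by omega))
  simp only [sq, Submodule.add_eq_sup, Ideal.sup_mul, Ideal.mul_sup]
  refine sup_le (sup_le ?_ ?_) (sup_le ?_ (hxx.trans le_sup_right))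
  · exact le_sup_left.trans le_sup_left
  · exact (mul_comm _ P).trans_le hPx |>.trans (le_sup_right.trans le_sup_left)
  · exact hPx.trans (le_sup_right.trans le_sup_left)

/-- Let `I₁ = (x_1,…,x_{n-1})² + x_n(x_1,…,x_{n-1}) + (x_n^{s+1})` and
`I₂ = (x_1,…,x_{n-1})² + x_n(x_1,…,x_{n-1})` in `K[x_1,…,x_n]` (here with `n+1`
variables indexed by `Fin (n+1)`, `x_n` being the last one), and let `σ` be the
permutation ordering the variables as `x_n, x_1, …, x_{n-1}`. Then
`d_σ(I₁) = (x_1,…,x_{n-1},x_n^s)` and `d_σ(I₂) = (x_1,…,x_{n-1})`, and in both cases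
`d_σ(I)² ⊆ I`, i.e. `I₁` and `I₂` are `d_σ`-Golod. -/
theorem stretched_defining_ideal_dSigmaGolod {K : Type*} [Field K] {n : ℕ}
    (s : ℕ) (hs : 2 ≤ s)
    (Q I1 I2 : Ideal (MvPolynomial (Fin (n + 1)) K))
    (hQ : Q = Ideal.span (Set.range fun i : Fin n =>
      (MvPolynomial.X i.castSucc : MvPolynomial (Fin (n + 1)) K)))
    (hI1 : I1 = Q ^ 2 + Ideal.span {MvPolynomial.X (Fin.last n)} * Q +
      Ideal.span {(MvPolynomial.X (Fin.last n) : MvPolynomial (Fin (n + 1)) K) ^ (s + 1)})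
    (hI2 : I2 = Q ^ 2 + Ideal.span {(MvPolynomial.X (Fin.last n) :
      MvPolynomial (Fin (n + 1)) K)} * Q)
    (σ : Equiv.Perm (Fin (n + 1))) (hσ : σ = (finRotate (n + 1))⁻¹) :
    dIdealSigma σ I1 = Q + Ideal.span
        {(MvPolynomial.X (Fin.last n) : MvPolynomial (Fin (n + 1)) K) ^ s} ∧
    dIdealSigma σ I2 = Q ∧
    (dIdealSigma σ I1) ^ 2 ≤ I1 ∧ (dIdealSigma σ I2) ^ 2 ≤ I2 := by
  have hσ0 : σ 0 = Fin.last n := by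
    rw [hσ, Equiv.Perm.inv_eq_iff_eq, finRotate_last]
  have hσsucc (i : Fin n) : σ i.succ = i.castSucc := by
    rw [hσ, Equiv.Perm.inv_eq_iff_eq, finRotate_apply, Fin.coeSucc_eq_succ]
  have hQ' : Q = (idealOfSuccVars K n).map (rename σ) := by
    rw [hQ, idealOfSuccVars, Ideal.map_span, ← Set.range_comp]
    simp only [Function.comp_def, rename_X, hσsucc]
  have hXlast : (X (Fin.last n) : MvPolynomial (Fin (n + 1)) K) = rename σ (X 0) := by
    rw [rename_X, hσ0]
  have hd1 : dIdealSigma σ I1 = Q + Ideal.span {X (Fin.last n) ^ s} := by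
    have hI1' : I1 = (idealOfSuccVars K n ^ 2 + Ideal.span {X 0} * idealOfSuccVars K n +
        Ideal.span {X 0 ^ (s + 1)}).map (rename σ) := by
      simp only [hI1, hQ', hXlast, Submodule.add_eq_sup, Ideal.map_sup, Ideal.map_mul,
        Ideal.map_pow, Ideal.map_span, Set.image_singleton, map_pow]
    rw [hI1', dIdealSigma_map_rename, dIdealSigma_one_sq_add_span_X_zero_mul_add_span_X_zero_pow,
      hQ', hXlast, Submodule.add_eq_sup, Ideal.map_sup, Ideal.map_span, Set.image_singleton,
      map_pow, Submodule.add_eq_sup]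
  have hd2 : dIdealSigma σ I2 = Q := by
    have hI2' : I2 = (idealOfSuccVars K n ^ 2 + Ideal.span {X 0} * idealOfSuccVars K n).map
        (rename σ) := by
      simp only [hI2, hQ', hXlast, Submodule.add_eq_sup, Ideal.map_sup, Ideal.map_mul,
        Ideal.map_pow, Ideal.map_span, Set.image_singleton]
    rw [hI2', dIdealSigma_map_rename, dIdealSigma_one_sq_add_span_X_zero_mul, hQ']
  refine ⟨hd1, hd2, ?_, ?_⟩
  · rw [hd1, hI1]
    exact sq_add_span_pow_le Q _ (by omega)
  · rw [hd2, hI2]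
    exact le_sup_left
end
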